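/- There exists a pargoid ⟨A, ·⟩ that is combinatorially complete but cannot be expanded to a partial combinatory algebra: no choice of elements s, k ∈ A satisfies (0) s·x·y defined for all x, y ∈ A, (1) s·x·y·z ≃ x·z·(y·z) for all x, y, z ∈ A, and (2) k·x·y defined and equal to x for all x, y ∈ A. -/

import Mathlib

/-- Formal `n`-ary polynomials of a pargoid with carrier `A`. -/
inductive PTerm (A : Type) (n : ℕ) : Type where
  | var : Fin n → PTerm A n
  | const : A → PTerm A n
  | app : PTerm A n → PTerm A n → PTerm A n

/-- The partial operation `Aⁿ ⇀ A` induced by a polynomial. -/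
def evalP {A : Type} {n : ℕ} (app : A → A → Part A) (x : Fin n → A) :
    PTerm A n → Part A
  | .var i => Part.some (x i)
  | .const a => Part.some a
  | .app r q => (evalP app x r).bind fun u => (evalP app x q).bind fun v => app u v

/-- The left-associated partial product `a·b₁·…·bₘ`. -/
def chain {A : Type} (app : A → A → Part A) : Part A → List A → Part A
  | a, [] => a
  | a, b :: l => chain app (a.bind fun c => app c b) l

/-- Combinatorial completeness of a pargoid. -/
def CombComplete {A : Type} (app : A → A → Part A) : Prop :=
  ∀ n : ℕ, 1 ≤ n → ∀ p : PTerm A n, ∃ a : A,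
    ∀ x : Fin n → A, chain app (Part.some a) (List.ofFn x) = evalP app x p

/-- Strict extension of the application to partial arguments. -/
def pApp {A : Type} (app : A → A → Part A) (x y : Part A) : Part A :=
  x.bind fun a => y.bind fun b => app a b

namespace S15

inductive Tm (A : Type) : Type where
  | var : ℕ → Tm A
  | const : A → Tm A
  | app : Tm A → Tm A → Tm A

inductive M : Type where
  | code : ℕ → Tm M → List M → M

inductive Ev : Tm M → List M → M → Prop where
  | var {env : List M} {i : ℕ} {v : M} : env[i]? = some v → Ev (.var i) env v
  | const {env : List M} (a : M) : Ev (.const a) env a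
  | sat {env : List M} {r q : Tm M} {m : ℕ} {t : Tm M} {l : List M} {w v : M} :
      Ev r env (.code m t l) → Ev q env w → l.length + 1 = m →
      Ev t (l ++ [w]) v → Ev (.app r q) env v
  | col {env : List M} {r q : Tm M} {m : ℕ} {t : Tm M} {l : List M} {w : M}
      {zs : List M} {d : M} :
      Ev r env (.code m t l) → Ev q env w → l.length + 1 < m →
      (l ++ w :: zs).length = m → Ev t (l ++ w :: zs) d →
      Ev (.app r q) env (.code m t (l ++ [w]))

def AEv (a b c : M) : Prop := Ev (.app (.const a) (.const b)) [] c

noncomputable def app (a b : M) : Part M := ⟨∃ c, AEv a b c, fun h => h.choose⟩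

theorem ev_det : ∀ {p : Tm M} {env : List M} {v : M}, Ev p env v →
    ∀ {v' : M}, Ev p env v' → v = v' := by
  intro p env v h
  induction h with
  | var hv => intro v' h'; cases h' with
    | var hv' => rw [hv] at hv'; exact Option.some_injective _ hv'
  | const a => intro v' h'; cases h'; rfl
  | sat h1 h2 hlen h3 ih1 ih2 ih3 =>
    intro v' h'
    cases h' with
    | sat h1' h2' hlen' h3' =>
      have e1 := ih1 h1'; injection e1 with em et el
      subst em; subst et; subst el
      have e2 := ih2 h2'; subst e2
      exact ih3 h3'
    | col h1' h2' hlt' hclen' h3' =>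
      have e1 := ih1 h1'; injection e1 with em et el
      subst em; subst et; subst el; omega
  | col h1 h2 hlt hclen h3 ih1 ih2 ih3 =>
    intro v' h'
    cases h' with
    | sat h1' h2' hlen' h3' =>
      have e1 := ih1 h1'; injection e1 with em et el
      subst em; subst et; subst el; omega
    | col h1' h2' hlt' hclen' h3' =>
      have e1 := ih1 h1'; injection e1 with em et el
      subst em; subst et; subst el
      have e2 := ih2 h2'; subst e2; rfl

theorem mem_app_iff {a b c : M} : c ∈ app a b ↔ AEv a b c := by
  constructor
  · rintro ⟨h, rfl⟩
    exact h.choose_spec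
  · intro h
    refine ⟨⟨c, h⟩, ?_⟩
    exact ev_det (Exists.choose_spec (⟨c, h⟩ : ∃ c, AEv a b c)) h

theorem app_eq_some {a b c : M} (h : AEv a b c) : app a b = Part.some c :=
  Part.eq_some_iff.2 (mem_app_iff.2 h)

theorem app_eq_none {a b : M} (h : ∀ c, ¬ AEv a b c) : app a b = Part.none :=
  Part.eq_none_iff.2 fun c hc => h c (mem_app_iff.1 hc)

theorem ev_const_inv {a v : M} {env : List M} (h : Ev (.const a) env v) : v = a := by
  cases h; rfl

/-- conversion from formal polynomials to untyped terms -/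
def conv {n : ℕ} : PTerm M n → Tm M
  | .var i => .var i.val
  | .const a => .const a
  | .app r q => .app (conv r) (conv q)

theorem aev_iff {u w c : M} {env : List M} :
    Ev (.app (.const u) (.const w)) env c ↔ AEv u w c := by
  constructor
  · intro h
    cases h with
    | sat h1 h2 hlen h3 =>
      have e1 := ev_const_inv h1; have e2 := ev_const_inv h2
      subst e1; subst e2
      exact Ev.sat (Ev.const _) (Ev.const _) hlen h3
    | col h1 h2 hlt hclen h3 =>
      have e1 := ev_const_inv h1; have e2 := ev_const_inv h2
      subst e1; subst e2
      exact Ev.col (Ev.const _) (Ev.const _) hlt hclen h3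
  · intro h
    cases h with
    | sat h1 h2 hlen h3 =>
      have e1 := ev_const_inv h1; have e2 := ev_const_inv h2
      subst e1; subst e2
      exact Ev.sat (Ev.const _) (Ev.const _) hlen h3
    | col h1 h2 hlt hclen h3 =>
      have e1 := ev_const_inv h1; have e2 := ev_const_inv h2
      subst e1; subst e2
      exact Ev.col (Ev.const _) (Ev.const _) hlt hclen h3

theorem mem_evalP {n : ℕ} (p : PTerm M n) (x : Fin n → M) : ∀ (c : M),
    c ∈ evalP app x p ↔ Ev (conv p) (List.ofFn x) c := by
  induction p with
  | var i =>
    intro c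
    simp only [evalP, conv, Part.mem_some_iff]
    constructor
    · rintro rfl
      exact Ev.var (by simp)
    · intro h; cases h with
      | var hv => simp at hv; exact hv.symm
  | const a =>
    intro c
    simp only [evalP, conv, Part.mem_some_iff]
    constructor
    · rintro rfl; exact Ev.const _
    · intro h; exact ev_const_inv h
  | app r q ihr ihq =>
    intro c
    simp only [evalP, conv]
    constructor
    · intro h
      rw [Part.mem_bind_iff] at h
      obtain ⟨u, hu, h⟩ := h
      rw [Part.mem_bind_iff] at h
      obtain ⟨w, hw, hc⟩ := h
      have hu' := (ihr u).1 hu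
      have hw' := (ihq w).1 hw
      have ha : AEv u w c := mem_app_iff.1 hc
      cases ha with
      | sat h1 h2 hlen h3 =>
        have e1 := ev_const_inv h1; have e2 := ev_const_inv h2
        subst e1; subst e2
        exact Ev.sat hu' hw' hlen h3
      | col h1 h2 hlt hclen h3 =>
        have e1 := ev_const_inv h1; have e2 := ev_const_inv h2
        subst e1; subst e2
        exact Ev.col hu' hw' hlt hclen h3
    · intro h
      cases h with
      | sat h1 h2 hlen h3 =>
        rw [Part.mem_bind_iff]
        refine ⟨_, (ihr _).2 h1, ?_⟩
        rw [Part.mem_bind_iff]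
        exact ⟨_, (ihq _).2 h2, mem_app_iff.2 (Ev.sat (Ev.const _) (Ev.const _) hlen h3)⟩
      | col h1 h2 hlt hclen h3 =>
        rw [Part.mem_bind_iff]
        refine ⟨_, (ihr _).2 h1, ?_⟩
        rw [Part.mem_bind_iff]
        exact ⟨_, (ihq _).2 h2, mem_app_iff.2 (Ev.col (Ev.const _) (Ev.const _) hlt hclen h3)⟩



theorem aev_col_val {n : ℕ} {t : Tm M} {l : List M} {b c : M}
    (hlt : l.length + 1 < n) (h : AEv (M.code n t l) b c) :
    c = M.code n t (l ++ [b]) := by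
  cases h with
  | sat h1 h2 hlen h3 =>
    have e1 := ev_const_inv h1
    injection e1 with em et el
    have e2 := ev_const_inv h2
    subst em; subst et; subst el; subst e2
    omega
  | col h1 h2 hlt' hclen h3 =>
    have e1 := ev_const_inv h1
    injection e1 with em et el
    have e2 := ev_const_inv h2
    subst em; subst et; subst el; subst e2
    rfl

theorem chain_none : ∀ xs : List M, chain app Part.none xs = Part.none := by
  intro xs
  induction xs with
  | nil => rfl
  | cons b xs ih => simp only [chain, Part.bind_none]; exact ih

theorem chain_mem : ∀ (xs l : List M) {n : ℕ} {t : Tm M} {env : List M},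
    l ++ xs = env → env.length = n → xs ≠ [] → ∀ c : M,
    (c ∈ chain app (Part.some (M.code n t l)) xs ↔ Ev t env c) := by
  intro xs
  induction xs with
  | nil => intro l n t env he hn hne; exact absurd rfl hne
  | cons b xs ih =>
    intro l n t env he hn hne c
    have hstep : chain app (Part.some (M.code n t l)) (b :: xs)
        = chain app (app (M.code n t l) b) xs := by
      simp only [chain, Part.bind_some]
    rw [hstep]
    rcases eq_or_ne xs [] with hxs | hxs
    · subst hxs
      have hlen : l.length + 1 = n := by
        subst he; simpa using hn
      show c ∈ app (M.code n t l) b ↔ Ev t env c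
      rw [mem_app_iff]
      constructor
      · intro h
        cases h with
        | sat h1 h2 hlen' h3 =>
          have e1 := ev_const_inv h1
          injection e1 with em et el
          have e2 := ev_const_inv h2
          subst em; subst et; subst el; subst e2
          rw [← he]
          exact h3
        | col h1 h2 hlt' hclen h3 =>
          have e1 := ev_const_inv h1
          injection e1 with em et el
          subst em; subst et; subst el
          omega
      · intro h
        refine Ev.sat (Ev.const _) (Ev.const _) hlen ?_
        rw [he]; exact h
    · have hlt : l.length + 1 < n := by
        subst he
        rw [List.length_append] at hn
        have : xs.length ≠ 0 := fun h0 => hxs (List.length_eq_zero_iff.1 h0)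
        simp at hn
        omega
      by_cases hD : (app (M.code n t l) b).Dom
      · have hval : app (M.code n t l) b = Part.some (M.code n t (l ++ [b])) := by
          have hg := (Part.some_get hD).symm
          have ha : AEv (M.code n t l) b ((app (M.code n t l) b).get hD) := hD.choose_spec
          rw [aev_col_val hlt ha] at hg
          exact hg
        rw [hval]
        refine ih (l ++ [b]) ?_ hn hxs c
        rw [List.append_assoc]
        simpa using he
      · have hnone : app (M.code n t l) b = Part.none := by
          rw [Part.eq_none_iff']
          exact hD
        rw [hnone, chain_none]
        constructor
        · intro hc; exact absurd hc (Part.notMem_none c)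
        · intro hc
          exfalso
          apply hD
          have : AEv (M.code n t l) b (M.code n t (l ++ [b])) := by
            refine Ev.col (zs := xs) (d := c) (Ev.const _) (Ev.const _) hlt ?_ ?_
            · rw [he]; exact hn
            · rw [he]; exact hc
          exact ⟨_, this⟩

theorem complete : CombComplete app := by
  intro n hn p
  refine ⟨M.code n (conv p) [], fun x => ?_⟩
  apply Part.ext
  intro c
  rw [mem_evalP]
  refine chain_mem (List.ofFn x) [] (by simp) (by simp) ?_ c
  simp only [ne_eq, List.ofFn_eq_nil_iff]
  omega

/-- `b` occurs as a constant of term `t` -/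
def ConstMem (b : M) : Tm M → Prop
  | .var _ => False
  | .const a => a = b
  | .app r q => ConstMem b r ∨ ConstMem b q

/-- hereditary occurrence of `u` in an element -/
inductive Occ : M → M → Prop where
  | self (a : M) : Occ a a
  | mem {u b : M} {n : ℕ} {t : Tm M} {l : List M} :
      Occ u b → b ∈ l → Occ u (.code n t l)
  | term {u b : M} {n : ℕ} {t : Tm M} {l : List M} :
      Occ u b → ConstMem b t → Occ u (.code n t l)

theorem constMem_size {b : M} : ∀ {t : Tm M}, ConstMem b t → sizeOf b < sizeOf t := by
  intro t
  induction t with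
  | var i => intro h; exact absurd h (by simp [ConstMem])
  | const a =>
    intro h
    have : a = b := h
    subst this
    simp
  | app r q ihr ihq =>
    intro h
    rcases h with h | h
    · have := ihr h; simp; omega
    · have := ihq h; simp; omega

theorem occ_size {u v : M} (h : Occ u v) : sizeOf u ≤ sizeOf v := by
  induction h with
  | self => exact le_refl _
  | mem h hb ih =>
    have h1 := List.sizeOf_lt_of_mem hb
    simp only [M.code.sizeOf_spec]
    omega
  | term h hb ih =>
    have h1 := constMem_size hb
    simp only [M.code.sizeOf_spec]
    omega

/-- a code with a certificate that some completion of its argument list evaluates -/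
def Live (v : M) : Prop :=
  ∃ (m : ℕ) (t : Tm M) (l zs : List M) (d : M),
    v = .code m t l ∧ l.length < m ∧ (l ++ zs).length = m ∧ Ev t (l ++ zs) d

/-- every hereditary part of a value of an evaluation is live or comes from
the term's constants or the environment -/
theorem old_val : ∀ {t : Tm M} {env : List M} {v : M}, Ev t env v →
    ∀ u : M, Occ u v →
      Live u ∨ (∃ b, Occ u b ∧ ConstMem b t) ∨ (∃ e ∈ env, Occ u e) := by
  intro t env v h
  induction h with
  | var hv =>
    intro u hu
    right; right
    exact ⟨_, List.mem_of_getElem? hv, hu⟩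
  | const a =>
    intro u hu
    right; left
    exact ⟨a, hu, rfl⟩
  | sat h1 h2 hlen h3 ih1 ih2 ih3 =>
    intro u hu
    rcases ih3 u hu with hL | ⟨b, hob, hcb⟩ | ⟨e, he, hoe⟩
    · exact Or.inl hL
    · -- b is a constant of t (the code's term): u occurs in the code
      rcases ih1 u (Occ.term hob hcb) with hL | ⟨b', hob', hcb'⟩ | ⟨e, he, hoe⟩
      · exact Or.inl hL
      · exact Or.inr (Or.inl ⟨b', hob', Or.inl hcb'⟩)
      · exact Or.inr (Or.inr ⟨e, he, hoe⟩)
    · rcases List.mem_append.1 he with he' | he'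
      · rcases ih1 u (Occ.mem hoe he') with hL | ⟨b', hob', hcb'⟩ | ⟨e', he'', hoe'⟩
        · exact Or.inl hL
        · exact Or.inr (Or.inl ⟨b', hob', Or.inl hcb'⟩)
        · exact Or.inr (Or.inr ⟨e', he'', hoe'⟩)
      · have : e = _ := List.mem_singleton.1 he'
        subst this
        rcases ih2 u hoe with hL | ⟨b', hob', hcb'⟩ | ⟨e', he'', hoe'⟩
        · exact Or.inl hL
        · exact Or.inr (Or.inl ⟨b', hob', Or.inr hcb'⟩)
        · exact Or.inr (Or.inr ⟨e', he'', hoe'⟩)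
  | col h1 h2 hlt hclen h3 ih1 ih2 ih3 =>
    rename_i env' r q m t' l w zs d
    intro u hu
    cases hu with
    | self =>
      left
      refine ⟨m, t', l ++ [w], zs, d, rfl, by simp; omega, by simpa using hclen, by simpa using h3⟩
    | mem hob hbl =>
      rcases List.mem_append.1 hbl with hbl' | hbl'
      · rcases ih1 u (Occ.mem hob hbl') with hL | ⟨b', hob', hcb'⟩ | ⟨e', he'', hoe'⟩
        · exact Or.inl hL
        · exact Or.inr (Or.inl ⟨b', hob', Or.inl hcb'⟩)
        · exact Or.inr (Or.inr ⟨e', he'', hoe'⟩)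
      · have : _ = w := List.mem_singleton.1 hbl'
        subst this
        rcases ih2 u hob with hL | ⟨b', hob', hcb'⟩ | ⟨e', he'', hoe'⟩
        · exact Or.inl hL
        · exact Or.inr (Or.inl ⟨b', hob', Or.inr hcb'⟩)
        · exact Or.inr (Or.inr ⟨e', he'', hoe'⟩)
    | term hob hcb =>
      rcases ih1 u (Occ.term hob hcb) with hL | ⟨b', hob', hcb'⟩ | ⟨e', he'', hoe'⟩
      · exact Or.inl hL
      · exact Or.inr (Or.inl ⟨b', hob', Or.inl hcb'⟩)
      · exact Or.inr (Or.inr ⟨e', he'', hoe'⟩)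

/-- every live element has a defined application -/
theorem live_app {v : M} (h : Live v) : ∃ z c, AEv v z c := by
  obtain ⟨m, t, l, zs, d, rfl, hlt, hclen, hev⟩ := h
  cases zs with
  | nil => simp at hclen; omega
  | cons z zs' =>
    rcases Nat.lt_or_ge (l.length + 1) m with hlt1 | hge
    · refine ⟨z, M.code m t (l ++ [z]), ?_⟩
      exact Ev.col (Ev.const _) (Ev.const _) hlt1 hclen hev
    · have hlen : l.length + 1 = m := by
        simp at hclen; omega
      have hzs' : zs' = [] := by
        simp at hclen
        have := List.length_eq_zero_iff.1 (by omega : zs'.length = 0)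
        exact this
      subst hzs'
      exact ⟨z, d, Ev.sat (Ev.const _) (Ev.const _) hlen hev⟩

def Nullary (d : M) : Prop := ∃ t : Tm M, d = .code 0 t []

open scoped Classical in
mutual
noncomputable def subM (d1 d2 e : M) : M → M
  | .code n t l =>
    if M.code n t l = d1 ∨ M.code n t l = d2 then e
    else .code n (subT d1 d2 e t) (subL d1 d2 e l)
noncomputable def subT (d1 d2 e : M) : Tm M → Tm M
  | .var i => .var i
  | .const a => .const (subM d1 d2 e a)
  | .app r q => .app (subT d1 d2 e r) (subT d1 d2 e q)
noncomputable def subL (d1 d2 e : M) : List M → List M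
  | [] => []
  | a :: l => subM d1 d2 e a :: subL d1 d2 e l
end

theorem subL_append (d1 d2 e : M) (l : List M) (w : M) :
    subL d1 d2 e (l ++ [w]) = subL d1 d2 e l ++ [subM d1 d2 e w] := by
  induction l with
  | nil => simp [subL]
  | cons a l ih => simp [subL, ih]

theorem subL_length (d1 d2 e : M) (l : List M) :
    (subL d1 d2 e l).length = l.length := by
  induction l with
  | nil => simp [subL]
  | cons a l ih => simp [subL, ih]

theorem subL_get? (d1 d2 e : M) (l : List M) (i : ℕ) :
    (subL d1 d2 e l)[i]? = (l[i]?).map (subM d1 d2 e) := by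
  induction l generalizing i with
  | nil => simp [subL]
  | cons a l ih =>
    cases i with
    | zero => simp [subL]
    | succ j => simpa [subL] using ih j

theorem subM_code (d1 d2 e : M) {n : ℕ} {t : Tm M} {l : List M}
    (h1 : M.code n t l ≠ d1) (h2 : M.code n t l ≠ d2) :
    subM d1 d2 e (M.code n t l) = M.code n (subT d1 d2 e t) (subL d1 d2 e l) := by
  rw [subM]
  rw [if_neg]
  push_neg
  exact ⟨h1, h2⟩

theorem code_ne_nullary {d : M} (hd : Nullary d) {m : ℕ} {t : Tm M} {l : List M}
    (hm : 1 ≤ m) : M.code m t l ≠ d := by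
  obtain ⟨t0, rfl⟩ := hd
  intro h
  injection h with h1 h2 h3
  omega

theorem code_ne_nullary' {d : M} (hd : Nullary d) {m : ℕ} {t : Tm M} {l : List M} {w : M} :
    M.code m t (l ++ [w]) ≠ d := by
  obtain ⟨t0, rfl⟩ := hd
  intro h
  injection h with h1 h2 h3
  simp at h3

theorem FL {d1 d2 e : M} (hd1 : Nullary d1) (hd2 : Nullary d2) :
    ∀ {t : Tm M} {env : List M} {v : M}, Ev t env v →
    ∀ {v' : M}, Ev (subT d1 d2 e t) (subL d1 d2 e env) v' →
    v' = subM d1 d2 e v := by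
  intro t env v h
  induction h with
  | var hv =>
    intro v' h'
    rw [subT] at h'
    cases h' with
    | var hv' =>
      rw [subL_get?] at hv'
      rename_i env i v
      rw [hv] at hv'
      simp at hv'
      exact hv'.symm
  | const a =>
    intro v' h'
    rw [subT] at h'
    exact ev_const_inv h'
  | sat h1 h2 hlen h3 ih1 ih2 ih3 =>
    rename_i env r q m t' l w v
    have hne1 : M.code m t' l ≠ d1 := code_ne_nullary hd1 (by omega)
    have hne2 : M.code m t' l ≠ d2 := code_ne_nullary hd2 (by omega)
    intro v' h'
    rw [subT] at h'
    cases h' with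
    | sat h1' h2' hlen' h3' =>
      have e1 := ih1 h1'
      rw [subM_code d1 d2 e hne1 hne2] at e1
      injection e1 with em et el
      subst em; subst et; subst el
      have e2 := ih2 h2'
      subst e2
      rw [← subL_append] at h3'
      exact ih3 h3'
    | col h1' h2' hlt' hclen' h3' =>
      have e1 := ih1 h1'
      rw [subM_code d1 d2 e hne1 hne2] at e1
      injection e1 with em et el
      subst em; subst et; subst el
      rw [subL_length] at hlt'
      omega
  | col h1 h2 hlt hclen h3 ih1 ih2 ih3 =>
    rename_i env r q m t' l w zs d
    have hne1 : M.code m t' l ≠ d1 := code_ne_nullary hd1 (by omega)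
    have hne2 : M.code m t' l ≠ d2 := code_ne_nullary hd2 (by omega)
    intro v' h'
    rw [subT] at h'
    cases h' with
    | sat h1' h2' hlen' h3' =>
      have e1 := ih1 h1'
      rw [subM_code d1 d2 e hne1 hne2] at e1
      injection e1 with em et el
      subst em; subst et; subst el
      rw [subL_length] at hlen'
      omega
    | col h1' h2' hlt' hclen' h3' =>
      have e1 := ih1 h1'
      rw [subM_code d1 d2 e hne1 hne2] at e1
      injection e1 with em et el
      subst em; subst et; subst el
      have e2 := ih2 h2'
      subst e2
      rw [subM_code d1 d2 e (code_ne_nullary' hd1) (code_ne_nullary' hd2),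
        subL_append]

theorem sub_self_all (d1 d2 e : M) : ∀ N : ℕ,
    (∀ m : M, sizeOf m ≤ N → sizeOf m < sizeOf d1 → sizeOf m < sizeOf d2 →
      subM d1 d2 e m = m) ∧
    (∀ t : Tm M, sizeOf t ≤ N → sizeOf t < sizeOf d1 → sizeOf t < sizeOf d2 →
      subT d1 d2 e t = t) ∧
    (∀ l : List M, sizeOf l ≤ N → sizeOf l < sizeOf d1 → sizeOf l < sizeOf d2 →
      subL d1 d2 e l = l) := by
  intro N
  induction N using Nat.strong_induction_on with
  | _ N ih =>
    refine ⟨?_, ?_, ?_⟩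
    · intro m hm hm1 hm2
      cases m with
      | code n t l =>
        have hst : sizeOf t < sizeOf (M.code n t l) := by
          simp only [M.code.sizeOf_spec]; omega
        have hsl : sizeOf l < sizeOf (M.code n t l) := by
          simp only [M.code.sizeOf_spec]; omega
        have hne1 : M.code n t l ≠ d1 := by
          intro h; rw [h] at hm1; omega
        have hne2 : M.code n t l ≠ d2 := by
          intro h; rw [h] at hm2; omega
        rw [subM_code d1 d2 e hne1 hne2]
        have ht := (ih (sizeOf t) (by omega)).2.1 t le_rfl (by omega) (by omega)
        have hl := (ih (sizeOf l) (by omega)).2.2 l le_rfl (by omega) (by omega)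
        rw [ht, hl]
    · intro t ht ht1 ht2
      cases t with
      | var i => rw [subT]
      | const a =>
        have hsa : sizeOf a < sizeOf (Tm.const (A := M) a) := by
          simp only [Tm.const.sizeOf_spec]; omega
        rw [subT]
        have ha := (ih (sizeOf a) (by omega)).1 a le_rfl (by omega) (by omega)
        rw [ha]
      | app r q =>
        have hsr : sizeOf r < sizeOf (Tm.app r q) := by
          simp only [Tm.app.sizeOf_spec]; omega
        have hsq : sizeOf q < sizeOf (Tm.app r q) := by
          simp only [Tm.app.sizeOf_spec]; omega
        rw [subT]
        have hr := (ih (sizeOf r) (by omega)).2.1 r le_rfl (by omega) (by omega)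
        have hq := (ih (sizeOf q) (by omega)).2.1 q le_rfl (by omega) (by omega)
        rw [hr, hq]
    · intro l hl hl1 hl2
      cases l with
      | nil => rw [subL]
      | cons a l' =>
        have hsa : sizeOf a < sizeOf (a :: l') := by
          simp only [List.cons.sizeOf_spec]; omega
        have hsl : sizeOf l' < sizeOf (a :: l') := by
          simp only [List.cons.sizeOf_spec]; omega
        rw [subL]
        have ha := (ih (sizeOf a) (by omega)).1 a le_rfl (by omega) (by omega)
        have hl' := (ih (sizeOf l') (by omega)).2.2 l' le_rfl (by omega) (by omega)
        rw [ha, hl']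

theorem sub_self {d1 d2 e : M} (m : M) (h1 : sizeOf m < sizeOf d1)
    (h2 : sizeOf m < sizeOf d2) : subM d1 d2 e m = m :=
  (sub_self_all d1 d2 e (sizeOf m)).1 m le_rfl h1 h2

theorem pApp_some_some (a b : M) :
    pApp app (Part.some a) (Part.some b) = app a b := by
  simp [pApp, Part.bind_some]

theorem pApp_none_left (p : Part M) : pApp app Part.none p = Part.none := by
  simp [pApp, Part.bind_none]

theorem app_nullary {d : M} (hd : Nullary d) (z : M) : app d z = Part.none := by
  obtain ⟨t0, rfl⟩ := hd
  apply app_eq_none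
  intro c h
  cases h with
  | sat h1 h2 hlen h3 =>
    have e := ev_const_inv h1
    injection e with em et el
    omega
  | col h1 h2 hlt hclen h3 =>
    have e := ev_const_inv h1
    injection e with em et el
    omega

/-- the K-like element -/
def Kc : M := M.code 2 (.var 0) []

theorem app_K (z : M) : app Kc z = Part.some (M.code 2 (.var 0) [z]) := by
  have hev : AEv Kc z (M.code 2 (.var 0) ([] ++ [z])) := by
    refine Ev.col (zs := [z]) (d := z) (Ev.const _) (Ev.const _) (by simp) (by simp) ?_
    exact Ev.var (by simp)
  simpa using app_eq_some hev

theorem app_Kz (z w : M) : app (M.code 2 (.var 0) [z]) w = Part.some z := by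
  refine app_eq_some (Ev.sat (Ev.const _) (Ev.const _) (by simp) ?_)
  exact Ev.var (by simp)

theorem occ_nullary {u : M} {t0 : Tm M} (h : Occ u (M.code 0 t0 [])) :
    u = M.code 0 t0 [] ∨ ∃ b, Occ u b ∧ ConstMem b t0 := by
  cases h with
  | self => exact Or.inl rfl
  | mem hob hbl => simp at hbl
  | term hob hcb => exact Or.inr ⟨_, hob, hcb⟩

theorem no_sk :
    ¬ ∃ s k : M,
        (∀ x y : M, (pApp app (pApp app (Part.some s) (Part.some x)) (Part.some y)).Dom) ∧
        (∀ x y z : M,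
          pApp app (pApp app (pApp app (Part.some s) (Part.some x)) (Part.some y)) (Part.some z)
            = pApp app (pApp app (Part.some x) (Part.some z)) (pApp app (Part.some y) (Part.some z))) ∧
        (∀ x y : M,
          pApp app (pApp app (Part.some k) (Part.some x)) (Part.some y) = Part.some x) := by
  rintro ⟨s, k, h0, h1, -⟩
  -- two fresh "dead" elements
  have h0' : ∀ x y : M, ∃ u t, app s x = Part.some u ∧ app u y = Part.some t := by
    intro x y
    have hD := h0 x y
    rw [pApp_some_some] at hD
    obtain ⟨c, hc⟩ := Part.dom_iff_mem.1 hD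
    rw [pApp, Part.mem_bind_iff] at hc
    obtain ⟨u, hu, hc⟩ := hc
    rw [Part.mem_bind_iff] at hc
    obtain ⟨b, hb, hc⟩ := hc
    rw [Part.mem_some_iff] at hb
    subst hb
    exact ⟨u, c, Part.eq_some_iff.2 hu, Part.eq_some_iff.2 hc⟩
  have key : ∀ x y u t : M, app s x = Part.some u → app u y = Part.some t →
      ∀ z : M, app t z
        = pApp app (pApp app (Part.some x) (Part.some z)) (pApp app (Part.some y) (Part.some z)) := by
    intro x y u t hu ht z
    have h := h1 x y z
    rw [pApp_some_some, hu, pApp_some_some, ht, pApp_some_some] at h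
    exact h
  obtain ⟨u1, t1, hu1, ht1⟩ := h0' (M.code 0 (.const s) []) (M.code 0 (.const (M.code 0 (.const s) [])) [])
  obtain ⟨u2, t2, hu2, ht2⟩ := h0' Kc Kc
  have hnull1 : Nullary (M.code 0 (.const s) []) := ⟨_, rfl⟩
  have hnull2 : Nullary (M.code 0 (.const (M.code 0 (.const s) [])) []) := ⟨_, rfl⟩
  have hdead : ∀ z, app t1 z = Part.none := by
    intro z
    rw [key _ _ u1 t1 hu1 ht1 z, pApp_some_some, pApp_some_some,
      app_nullary hnull1 z, pApp_none_left]
  have hlive : ∀ z, app t2 z = Part.some z := by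
    intro z
    rw [key _ _ u2 t2 hu2 ht2 z, pApp_some_some, app_K z,
      pApp_some_some, app_Kz]
  -- abbreviations
  set D1 : M := M.code 0 (.const s) [] with hD1def
  set D2 : M := M.code 0 (.const D1) [] with hD2def
  have hs1 : sizeOf s < sizeOf D1 := by
    rw [hD1def]
    simp only [M.code.sizeOf_spec, Tm.const.sizeOf_spec, List.nil.sizeOf_spec, sizeOf_nat]
    omega
  have hs2 : sizeOf D1 < sizeOf D2 := by
    rw [hD2def]
    simp only [M.code.sizeOf_spec, Tm.const.sizeOf_spec, List.nil.sizeOf_spec, sizeOf_nat]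
    omega
  have hsubs : subM D1 D2 Kc s = s := sub_self s hs1 (lt_trans hs1 hs2)
  have SM1 : subM D1 D2 Kc D1 = Kc := by
    rw [hD1def, subM, if_pos (Or.inl (by rw [← hD1def]))]
  have SM2 : subM D1 D2 Kc D2 = Kc := by
    rw [hD2def, subM, if_pos (Or.inr (by rw [← hD2def]))]
  have aev1 : AEv s D1 u1 := mem_app_iff.1 (Part.eq_some_iff.1 hu1)
  have aevt1 : AEv u1 D2 t1 := mem_app_iff.1 (Part.eq_some_iff.1 ht1)
  have aev2 : AEv s Kc u2 := mem_app_iff.1 (Part.eq_some_iff.1 hu2)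
  have aevt2 : AEv u2 Kc t2 := mem_app_iff.1 (Part.eq_some_iff.1 ht2)
  have hu21 : u2 = subM D1 D2 Kc u1 := by
    refine FL hnull1 hnull2 aev1 ?_
    have e1 : subT D1 D2 Kc (.app (.const s) (.const D1)) = .app (.const s) (.const Kc) := by
      rw [subT, subT, subT, hsubs, SM1]
    have e2 : subL D1 D2 Kc [] = [] := by rw [subL]
    rw [e1, e2]
    exact aev2
  have ht21 : t2 = subM D1 D2 Kc t1 := by
    refine FL hnull1 hnull2 aevt1 ?_
    have e1 : subT D1 D2 Kc (.app (.const u1) (.const D2)) = .app (.const u2) (.const Kc) := by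
      rw [subT, subT, subT, SM2, hu21]
    have e2 : subL D1 D2 Kc [] = [] := by rw [subL]
    rw [e1, e2]
    exact aevt2
  -- t2 cannot be Kc
  have hKc : t2 ≠ Kc := by
    intro hteq
    have e := hlive D1
    rw [hteq, app_K] at e
    have e' := Part.some_inj.1 e
    rw [hD1def] at e'
    injection e' with e1 e2 e3
    omega
  -- t1 cannot occur in s
  have hsmallS : ¬ Occ t1 s := by
    intro hocc
    have hsize := occ_size hocc
    have hsub : subM D1 D2 Kc t1 = t1 :=
      sub_self t1 (by omega) (by omega)
    have e := hlive Kc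
    rw [ht21, hsub, hdead Kc] at e
    exact Part.some_ne_none Kc e.symm
  have hD1case : ¬ Occ t1 D1 := by
    intro hocc
    rw [hD1def] at hocc
    rcases occ_nullary hocc with he | ⟨b, hob, hcb⟩
    · apply hKc
      rw [ht21, he, ← hD1def]
      exact SM1
    · have hbs : b = s := hcb.symm
      subst hbs
      exact hsmallS hob
  have hD2case : ¬ Occ t1 D2 := by
    intro hocc
    rw [hD2def] at hocc
    rcases occ_nullary hocc with he | ⟨b, hob, hcb⟩
    · apply hKc
      rw [ht21, he, ← hD2def]
      exact SM2
    · have hbs : b = D1 := hcb.symm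
      subst hbs
      exact hD1case hob
  -- now the occurrence analysis of t1
  have hnotlive : ¬ Live t1 := by
    intro hL
    obtain ⟨z, c, hzc⟩ := live_app hL
    have hmem := mem_app_iff.2 hzc
    rw [hdead z] at hmem
    exact Part.notMem_none c hmem
  rcases old_val aevt1 t1 (Occ.self t1) with hL | ⟨b, hob, hcb⟩ | ⟨e, he, _⟩
  · exact hnotlive hL
  · simp only [ConstMem] at hcb
    rcases hcb with hcb | hcb
    · -- b is a constant of (.const u1), i.e. b = u1
      have hbu : b = u1 := hcb.symm
      subst hbu
      rcases old_val aev1 t1 hob with hL | ⟨b', hob', hcb'⟩ | ⟨e, he, _⟩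
      · exact hnotlive hL
      · simp only [ConstMem] at hcb'
        rcases hcb' with hcb' | hcb'
        · have : b' = s := hcb'.symm
          subst this
          exact hsmallS hob'
        · have : b' = D1 := hcb'.symm
          subst this
          exact hD1case hob'
      · simp at he
    · have : b = D2 := hcb.symm
      subst this
      exact hD2case hob
  · simp at he

end S15

/-- there exists a pargoid `⟨A, ·⟩` that is combinatorially
complete but cannot be expanded to a partial combinatory algebra: no choice of
`s, k ∈ A` satisfies (0) `s·x·y` defined for all `x, y`, (1)
`s·x·y·z ≃ x·z·(y·z)` for all `x, y, z`, and (2) `k·x·y` defined and equal to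
`x` for all `x, y`. -/
theorem stmt15 :
    ∃ (A : Type) (app : A → A → Part A), Nonempty A ∧ CombComplete app ∧
      ¬ ∃ s k : A,
        (∀ x y : A, (pApp app (pApp app (Part.some s) (Part.some x)) (Part.some y)).Dom) ∧
        (∀ x y z : A,
          pApp app (pApp app (pApp app (Part.some s) (Part.some x)) (Part.some y)) (Part.some z)
            = pApp app (pApp app (Part.some x) (Part.some z)) (pApp app (Part.some y) (Part.some z))) ∧
        (∀ x y : A,
          pApp app (pApp app (Part.some k) (Part.some x)) (Part.some y) = Part.some x) := by
  exact ⟨S15.M, S15.app, ⟨S15.M.code 1 (.var 0) []⟩, S15.complete, S15.no_sk⟩
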